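/- arXiv:2101.10422 — 2 statements merged into one kernel-verified Lean document; each statement's English description precedes it below -/
import Mathlib

section
/- Let V, W be super vector spaces with queer structures α, β (odd involutions squaring to the identity). Let ζ² = −1, and let U_ζ and U_{−ζ} be the ζ- and (−ζ)-eigenspaces of α⊗β on V⊗W. Then V⊗W = U_ζ ⊕ U_{−ζ}, and the map α⊗1 restricts to a linear isomorphism U_ζ → U_{−ζ}. -/
/-!
On pure tensors `v ⊗ w` with `v` homogeneous one checks that `γ = α ⊗ β` squares to `-1` and
anticommutes with `δ = α ⊗ 1`: `α` changes the parity of `v`, hence the Koszul sign. Any operator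
with `γ² = ζ²` splits the space into its `±ζ`-eigenspaces once `2ζ` is invertible, and an
involution anticommuting with `γ` exchanges them.
-/

namespace Module.End

variable {R M : Type*} [CommRing R] [AddCommGroup M] [Module R M]

theorem ker_sub_smul_id_eq_eigenspace (f : End R M) (μ : R) :
    LinearMap.ker (f - μ • LinearMap.id) = f.eigenspace μ := by
  ext x
  rw [mem_eigenspace_iff, LinearMap.mem_ker, LinearMap.sub_apply, LinearMap.smul_apply,
    LinearMap.id_apply, sub_eq_zero]

theorem ker_add_smul_id_eq_eigenspace_neg (f : End R M) (μ : R) :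
    LinearMap.ker (f + μ • LinearMap.id) = f.eigenspace (-μ) := by
  rw [← ker_sub_smul_id_eq_eigenspace, neg_smul, sub_neg_eq_add]

theorem mapsTo_eigenspace_neg_of_anticommute {f g : End R M} (hfg : f ∘ₗ g = -(g ∘ₗ f)) (μ : R) :
    Set.MapsTo g (f.eigenspace μ) (f.eigenspace (-μ)) := fun x hx => by
  rw [SetLike.mem_coe, mem_eigenspace_iff] at hx ⊢
  rw [← LinearMap.comp_apply, hfg, LinearMap.neg_apply, LinearMap.comp_apply, hx, map_smul,
    neg_smul]

theorem bijOn_eigenspace_neg_of_anticommute {f g : End R M} (hfg : f ∘ₗ g = -(g ∘ₗ f))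
    (hg : g ∘ₗ g = LinearMap.id) (μ : R) :
    Set.BijOn g (f.eigenspace μ) (f.eigenspace (-μ)) := by
  have hinv : ∀ x, g (g x) = x := fun x => LinearMap.congr_fun hg x
  refine Set.InvOn.bijOn ⟨fun x _ => hinv x, fun x _ => hinv x⟩
    (mapsTo_eigenspace_neg_of_anticommute hfg μ) ?_
  simpa only [neg_neg] using mapsTo_eigenspace_neg_of_anticommute hfg (-μ)

end Module.End

namespace Module.End

variable {K M : Type*} [Field K] [NeZero (2 : K)] [AddCommGroup M] [Module K M]

/-- Writing `2ζ • x = (ζ • x + f x) + (ζ • x - f x)` splits `x` into eigenvectors for `±ζ`. -/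
theorem eigenspace_sup_eigenspace_neg_eq_top {f : End K M} {ζ : K} (hζ : ζ ≠ 0)
    (hf : f ∘ₗ f = ζ ^ 2 • LinearMap.id) : f.eigenspace ζ ⊔ f.eigenspace (-ζ) = ⊤ := by
  have hff : ∀ x, f (f x) = ζ ^ 2 • x := fun x => LinearMap.congr_fun hf x
  have h2ζ : 2 * ζ ≠ 0 := mul_ne_zero two_ne_zero hζ
  refine eq_top_iff.mpr fun x _ => ?_
  have hplus : ζ • x + f x ∈ f.eigenspace ζ := by
    rw [mem_eigenspace_iff, map_add, map_smul, hff, smul_add, smul_smul, ← sq, add_comm]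
  have hminus : ζ • x - f x ∈ f.eigenspace (-ζ) := by
    rw [mem_eigenspace_iff, map_sub, map_smul, hff, smul_sub, neg_smul, neg_smul, smul_smul,
      ← sq]
    abel
  have hx : x = (2 * ζ)⁻¹ • (ζ • x + f x) + (2 * ζ)⁻¹ • (ζ • x - f x) := by
    rw [← smul_add, add_add_sub_cancel, ← two_smul K, smul_smul, smul_smul, mul_assoc,
      inv_mul_cancel₀ h2ζ, one_smul]
  rw [hx]
  exact Submodule.add_mem_sup (Submodule.smul_mem _ _ hplus) (Submodule.smul_mem _ _ hminus)

theorem isCompl_eigenspace_eigenspace_neg {f : End K M} {ζ : K} (hζ : ζ ≠ 0)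
    (hf : f ∘ₗ f = ζ ^ 2 • LinearMap.id) : IsCompl (f.eigenspace ζ) (f.eigenspace (-ζ)) where
  disjoint := f.disjoint_genEigenspace (fun h => mul_ne_zero two_ne_zero hζ
    (by rw [two_mul]; exact eq_neg_iff_add_eq_zero.mp h)) 1 1
  codisjoint := codisjoint_iff.mpr (eigenspace_sup_eigenspace_neg_eq_top hζ hf)

end Module.End

namespace TensorProduct

theorem ext_of_sup_eq_top_left {R V W P : Type*} [CommSemiring R] [AddCommMonoid V] [Module R V]
    [AddCommMonoid W] [Module R W] [AddCommMonoid P] [Module R P]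
    {V₀ V₁ : Submodule R V} (hV : V₀ ⊔ V₁ = ⊤) {f g : V ⊗[R] W →ₗ[R] P}
    (h₀ : ∀ v ∈ V₀, ∀ w, f (v ⊗ₜ w) = g (v ⊗ₜ w))
    (h₁ : ∀ v ∈ V₁, ∀ w, f (v ⊗ₜ w) = g (v ⊗ₜ w)) : f = g := by
  refine TensorProduct.ext' fun v w => ?_
  obtain ⟨v₀, hv₀, v₁, hv₁, rfl⟩ := Submodule.mem_sup.mp (hV.ge (Submodule.mem_top : v ∈ ⊤))
  rw [add_tmul, map_add, map_add, h₀ v₀ hv₀, h₁ v₁ hv₁]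

section Koszul

variable {R V W : Type*} [CommRing R] [AddCommGroup V] [Module R V] [AddCommGroup W] [Module R W]
  {V₀ V₁ : Submodule R V} {α : V →ₗ[R] V} {β : W →ₗ[R] W}
  {γ : V ⊗[R] W →ₗ[R] V ⊗[R] W}

theorem koszul_comp_self (hV : V₀ ⊔ V₁ = ⊤)
    (hα0 : ∀ v ∈ V₀, α v ∈ V₁) (hα1 : ∀ v ∈ V₁, α v ∈ V₀)
    (hα2 : ∀ v, α (α v) = v) (hβ2 : ∀ w, β (β w) = w)
    (hγ0 : ∀ v ∈ V₀, ∀ w, γ (v ⊗ₜ w) = α v ⊗ₜ β w)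
    (hγ1 : ∀ v ∈ V₁, ∀ w, γ (v ⊗ₜ w) = -(α v ⊗ₜ β w)) :
    γ ∘ₗ γ = -LinearMap.id := by
  refine ext_of_sup_eq_top_left hV (fun v hv w => ?_) (fun v hv w => ?_)
  · simp only [LinearMap.comp_apply, LinearMap.neg_apply, LinearMap.id_apply, hγ0 v hv,
      hγ1 _ (hα0 v hv), hα2, hβ2]
  · simp only [LinearMap.comp_apply, LinearMap.neg_apply, LinearMap.id_apply, hγ1 v hv, map_neg,
      hγ0 _ (hα1 v hv), hα2, hβ2]

theorem koszul_comp_rTensor (hV : V₀ ⊔ V₁ = ⊤)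
    (hα0 : ∀ v ∈ V₀, α v ∈ V₁) (hα1 : ∀ v ∈ V₁, α v ∈ V₀)
    (hγ0 : ∀ v ∈ V₀, ∀ w, γ (v ⊗ₜ w) = α v ⊗ₜ β w)
    (hγ1 : ∀ v ∈ V₁, ∀ w, γ (v ⊗ₜ w) = -(α v ⊗ₜ β w)) :
    γ ∘ₗ α.rTensor W = -(α.rTensor W ∘ₗ γ) := by
  refine ext_of_sup_eq_top_left hV (fun v hv w => ?_) (fun v hv w => ?_)
  · simp only [LinearMap.comp_apply, LinearMap.neg_apply, LinearMap.rTensor_tmul, hγ0 v hv,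
      hγ1 _ (hα0 v hv)]
  · simp only [LinearMap.comp_apply, LinearMap.neg_apply, LinearMap.rTensor_tmul, hγ1 v hv,
      map_neg, hγ0 _ (hα1 v hv), neg_neg]

end Koszul

end TensorProduct

theorem half_tensor_decomposition_general (ζ : ℂ) (hζ : ζ ^ 2 = -1)
    (V W : Type) [AddCommGroup V] [Module ℂ V] [AddCommGroup W] [Module ℂ W]
    (V₀ V₁ : Submodule ℂ V)
    (hV : V₀ ⊔ V₁ = ⊤)
    (α : V →ₗ[ℂ] V) (β : W →ₗ[ℂ] W)
    (hα0 : ∀ v ∈ V₀, α v ∈ V₁) (hα1 : ∀ v ∈ V₁, α v ∈ V₀)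
    (hα2 : ∀ v, α (α v) = v) (hβ2 : ∀ w, β (β w) = w)
    (γ δ : TensorProduct ℂ V W →ₗ[ℂ] TensorProduct ℂ V W)
    (hγ0 : ∀ v ∈ V₀, ∀ w : W, γ (v ⊗ₜ[ℂ] w) = α v ⊗ₜ[ℂ] β w)
    (hγ1 : ∀ v ∈ V₁, ∀ w : W, γ (v ⊗ₜ[ℂ] w) = -(α v ⊗ₜ[ℂ] β w))
    (hδ : ∀ (v : V) (w : W), δ (v ⊗ₜ[ℂ] w) = α v ⊗ₜ[ℂ] w) :
    (LinearMap.ker (γ - ζ • (LinearMap.id : TensorProduct ℂ V W →ₗ[ℂ] TensorProduct ℂ V W)) ⊓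
      LinearMap.ker (γ + ζ • (LinearMap.id : TensorProduct ℂ V W →ₗ[ℂ] TensorProduct ℂ V W)) = ⊥) ∧
    (LinearMap.ker (γ - ζ • (LinearMap.id : TensorProduct ℂ V W →ₗ[ℂ] TensorProduct ℂ V W)) ⊔
      LinearMap.ker (γ + ζ • (LinearMap.id : TensorProduct ℂ V W →ₗ[ℂ] TensorProduct ℂ V W)) = ⊤) ∧
    (∀ z ∈ LinearMap.ker (γ - ζ • (LinearMap.id : TensorProduct ℂ V W →ₗ[ℂ] TensorProduct ℂ V W)),
      δ z ∈ LinearMap.ker (γ + ζ • (LinearMap.id : TensorProduct ℂ V W →ₗ[ℂ] TensorProduct ℂ V W))) ∧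
    Set.BijOn (⇑δ)
      (LinearMap.ker (γ - ζ • (LinearMap.id : TensorProduct ℂ V W →ₗ[ℂ] TensorProduct ℂ V W)) : Set (TensorProduct ℂ V W))
      (LinearMap.ker (γ + ζ • (LinearMap.id : TensorProduct ℂ V W →ₗ[ℂ] TensorProduct ℂ V W)) : Set (TensorProduct ℂ V W)) := by
  obtain rfl : δ = α.rTensor W := TensorProduct.ext' hδ
  have hγγ : γ ∘ₗ γ = ζ ^ 2 • LinearMap.id := by
    rw [hζ, TensorProduct.koszul_comp_self hV hα0 hα1 hα2 hβ2 hγ0 hγ1]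
    ext
    simp
  have hδδ : α.rTensor W ∘ₗ α.rTensor W = LinearMap.id := by
    have hαα : α ∘ₗ α = LinearMap.id := LinearMap.ext hα2
    rw [← LinearMap.rTensor_comp, hαα, LinearMap.rTensor_id]
  have hζ0 : ζ ≠ 0 := by
    rintro rfl
    norm_num at hζ
  have hcompl := Module.End.isCompl_eigenspace_eigenspace_neg hζ0 hγγ
  have hbij := Module.End.bijOn_eigenspace_neg_of_anticommute
    (TensorProduct.koszul_comp_rTensor hV hα0 hα1 hγ0 hγ1) hδδ ζ
  rw [Module.End.ker_sub_smul_id_eq_eigenspace, Module.End.ker_add_smul_id_eq_eigenspace_neg]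
  exact ⟨hcompl.inf_eq_bot, hcompl.sup_eq_top, fun z hz => hbij.mapsTo hz, hbij⟩

/-- For queer structures `α, β` on `V, W`, the operator `γ = α⊗β` (with the
Koszul sign) has `V⊗W` as the direct sum of its `ζ`- and `(-ζ)`-eigenspaces
(where `ζ² = -1`), and `δ = α⊗1` restricts to a linear isomorphism from the
`ζ`-eigenspace onto the `(-ζ)`-eigenspace. Eigenspaces are expressed as
`ker (γ - ζ•id)` and `ker (γ + ζ•id)`. -/
theorem half_tensor_decomposition (ζ : ℂ) (hζ : ζ ^ 2 = -1)
    (V W : Type) [AddCommGroup V] [Module ℂ V] [AddCommGroup W] [Module ℂ W]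
    (V₀ V₁ : Submodule ℂ V) (W₀ W₁ : Submodule ℂ W)
    (hV : V₀ ⊔ V₁ = ⊤) (hW : W₀ ⊔ W₁ = ⊤)
    (α : V →ₗ[ℂ] V) (β : W →ₗ[ℂ] W)
    (hα0 : ∀ v ∈ V₀, α v ∈ V₁) (hα1 : ∀ v ∈ V₁, α v ∈ V₀)
    (hβ0 : ∀ w ∈ W₀, β w ∈ W₁) (hβ1 : ∀ w ∈ W₁, β w ∈ W₀)
    (hα2 : ∀ v, α (α v) = v) (hβ2 : ∀ w, β (β w) = w)
    (γ δ : TensorProduct ℂ V W →ₗ[ℂ] TensorProduct ℂ V W)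
    (hγ0 : ∀ v ∈ V₀, ∀ w : W, γ (v ⊗ₜ[ℂ] w) = α v ⊗ₜ[ℂ] β w)
    (hγ1 : ∀ v ∈ V₁, ∀ w : W, γ (v ⊗ₜ[ℂ] w) = -(α v ⊗ₜ[ℂ] β w))
    (hδ : ∀ (v : V) (w : W), δ (v ⊗ₜ[ℂ] w) = α v ⊗ₜ[ℂ] w) :
    (LinearMap.ker (γ - ζ • (LinearMap.id : TensorProduct ℂ V W →ₗ[ℂ] TensorProduct ℂ V W)) ⊓
      LinearMap.ker (γ + ζ • (LinearMap.id : TensorProduct ℂ V W →ₗ[ℂ] TensorProduct ℂ V W)) = ⊥) ∧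
    (LinearMap.ker (γ - ζ • (LinearMap.id : TensorProduct ℂ V W →ₗ[ℂ] TensorProduct ℂ V W)) ⊔
      LinearMap.ker (γ + ζ • (LinearMap.id : TensorProduct ℂ V W →ₗ[ℂ] TensorProduct ℂ V W)) = ⊤) ∧
    (∀ z ∈ LinearMap.ker (γ - ζ • (LinearMap.id : TensorProduct ℂ V W →ₗ[ℂ] TensorProduct ℂ V W)),
      δ z ∈ LinearMap.ker (γ + ζ • (LinearMap.id : TensorProduct ℂ V W →ₗ[ℂ] TensorProduct ℂ V W))) ∧
    Set.BijOn (⇑δ)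
      (LinearMap.ker (γ - ζ • (LinearMap.id : TensorProduct ℂ V W →ₗ[ℂ] TensorProduct ℂ V W)) : Set (TensorProduct ℂ V W))
      (LinearMap.ker (γ + ζ • (LinearMap.id : TensorProduct ℂ V W →ₗ[ℂ] TensorProduct ℂ V W)) : Set (TensorProduct ℂ V W)) :=
  half_tensor_decomposition_general ζ hζ V W V₀ V₁ hV α β hα0 hα1 hα2 hβ2 γ δ hγ0 hγ1 hδ
end

section
/- In the ring Λ of symmetric functions, the Schur Q-functions satisfy the Pieri-type rule Q₁ · Q_λ = Σ_{μ ⊃ λ, ℓ(μ)=ℓ(λ)} 2 Q_μ + Σ_{μ ⊃ λ, ℓ(μ)=ℓ(λ)+1} Q_μ, where λ is a strict partition of n and μ ranges over strict partitions of n+1 containing λ. -/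
/-- A strict partition: parts strictly decrease until they reach 0. -/
structure StrictPartition where
  parts : ℕ → ℕ
  decr : ∀ i, parts (i + 1) < parts i ∨ parts (i + 1) = 0

/-- The number of (nonzero) parts of a strict partition. -/
noncomputable def StrictPartition.len (p : StrictPartition) : ℕ :=
  sInf {n | p.parts n = 0}

/-- The Schur Q-function `Q_p` (for a sequence of parts `p` with `k` nonzero
parts) in `n` variables, as an element of the fraction field of
`ℚ[x₁,…,xₙ]`, via Macdonald's formula
`Q_p = 2^k (n-k)!⁻¹ Σ_{w ∈ Sₙ} w( x^p ∏_{i ≤ k, i < j} (xᵢ+xⱼ)/(xᵢ-xⱼ) )`. -/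
noncomputable def schurQ (n : ℕ) (p : ℕ → ℕ) (k : ℕ) :
    FractionRing (MvPolynomial (Fin n) ℚ) :=
  let X : Fin n → FractionRing (MvPolynomial (Fin n) ℚ) := fun i =>
    algebraMap (MvPolynomial (Fin n) ℚ) (FractionRing (MvPolynomial (Fin n) ℚ))
      (MvPolynomial.X i)
  ((2 : FractionRing (MvPolynomial (Fin n) ℚ)) ^ k *
      ((Nat.factorial (n - k) : FractionRing (MvPolynomial (Fin n) ℚ)))⁻¹) *
    ∑ w : Equiv.Perm (Fin n),
      (∏ i : Fin n, X (w i) ^ p i.val) *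
      ∏ pr ∈ Finset.univ.filter
          (fun pr : Fin n × Fin n => pr.1 < pr.2 ∧ pr.1.val < k),
        (X (w pr.1) + X (w pr.2)) / (X (w pr.1) - X (w pr.2))

/-!
By Macdonald's formula, `Q_λ = 2^ℓ/(n-ℓ)! · Σ_w w(x^λ ∏_{i<j, i<ℓ} (x_i+x_j)/(x_i-x_j))` with
`ℓ = ℓ(λ)`, and `Q₁ = 2 Σ x_m`. Moving the symmetric factor `Σ x_m` inside the symmetrization
adds a box to row `m` of the exponent. All rows `m ≥ ℓ` give the same term, because transposing
two such rows fixes the rest of the summand; this term is the one for `λ` with a new part `1`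
once the number of rows carrying the factors `(x_i+x_j)/(x_i-x_j)` is raised to `ℓ + 1`, by the
identity `Σ_{m∈T} x_m ∏_{j∈T, j≠m} (x_m+x_j)/(x_m-x_j) = Σ_{m∈T} x_m`. A box added to row
`i > 0` with `λ_{i-1} = λ_i + 1` creates two equal adjacent parts, and transposing them changes
the sign of the summand, so that term vanishes.
-/

namespace StrictPartition

variable (lam : StrictPartition)

lemma exists_parts_eq_zero : ∃ i, lam.parts i = 0 := by
  by_contra! h
  have hdescent : ∀ i, lam.parts i + i ≤ lam.parts 0 := by
    intro i
    induction i with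
    | zero => simp
    | succ i ih => have := (lam.decr i).resolve_right (h _); omega
  have := hdescent (lam.parts 0 + 1)
  omega

lemma parts_eq_zero_of_len_le {j : ℕ} (hj : lam.len ≤ j) : lam.parts j = 0 := by
  induction j, hj using Nat.le_induction with
  | base => exact Nat.sInf_mem lam.exists_parts_eq_zero
  | succ j _ ih => have := lam.decr j; omega

lemma parts_succ_lt {i : ℕ} (hi : i < lam.len) : lam.parts (i + 1) < lam.parts i := by
  have : lam.parts i ≠ 0 := Nat.notMem_of_lt_sInf (s := {j | lam.parts j = 0}) hi
  have := lam.decr i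
  omega

end StrictPartition

namespace SchurQ

open Finset Equiv

section PartialFractions

variable {F ι : Type*} [Field F] [DecidableEq ι]

def ratio (x : ι → F) (i j : ι) : F := (x i + x j) / (x i - x j)

lemma sum_mul_prod_ratio_erase_insert (x : ι → F) (g : ι → F) {a : ι} {S : Finset ι}
    (ha : a ∉ S) :
    ∑ i ∈ S, g i * ∏ j ∈ (insert a S).erase i, ratio x i j =
      ∑ i ∈ S, g i * ratio x i a * ∏ j ∈ S.erase i, ratio x i j := by
  refine sum_congr rfl fun i hi => ?_
  rw [erase_insert_of_ne (fun h => ha (by rwa [h])),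
    prod_insert (fun h => ha (mem_of_mem_erase h)), mul_assoc]

/-- Partial fractions in `t`. -/
lemma prod_add_div_sub_eq_one_add_sum (x : ι → F) (S : Finset ι) (hx : Set.InjOn x S)
    (t : F) (ht : ∀ i ∈ S, t ≠ x i) :
    ∏ i ∈ S, (t + x i) / (t - x i) =
      1 + ∑ i ∈ S, 2 * x i / (t - x i) * ∏ j ∈ S.erase i, ratio x i j := by
  induction S using Finset.induction_on generalizing t with
  | empty => simp
  | @insert a S ha ih =>
    have hxS : Set.InjOn x S := hx.mono (by simp)
    have hxa : ∀ i ∈ S, x a ≠ x i := fun i hi h =>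
      ha (hx (by simp) (by simp [hi]) h ▸ hi)
    have hta : t - x a ≠ 0 := sub_ne_zero.mpr (ht a (by simp))
    have hterm : ∀ i ∈ S, (t + x a) / (t - x a) * (2 * x i / (t - x i)) =
        2 * x a / (t - x a) * (2 * x i / (x a - x i)) + 2 * x i / (t - x i) * ratio x i a := by
      intro i hi
      have : t - x i ≠ 0 := sub_ne_zero.mpr (ht i (by simp [hi]))
      have : x a - x i ≠ 0 := sub_ne_zero.mpr (hxa i hi)
      have : x i - x a ≠ 0 := sub_ne_zero.mpr (hxa i hi).symm
      simp only [ratio]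
      field_simp
      ring
    have hhead : (t + x a) / (t - x a) = 1 + 2 * x a / (t - x a) := by
      field_simp
      ring
    rw [prod_insert ha, sum_insert ha, ih hxS t (fun i hi => ht i (by simp [hi])),
      erase_insert ha, sum_mul_prod_ratio_erase_insert x _ ha,
      show ∏ j ∈ S, ratio x a j = ∏ j ∈ S, (x a + x j) / (x a - x j) from rfl, ih hxS (x a) hxa,
      mul_add, mul_sum, mul_add, mul_sum, mul_one, mul_one,
      sum_congr rfl fun i hi => by rw [← mul_assoc, hterm i hi, add_mul, mul_assoc],
      sum_add_distrib, hhead]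
    ring

lemma sum_mul_prod_ratio_erase (x : ι → F) (S : Finset ι) (hx : Set.InjOn x S) :
    ∑ i ∈ S, x i * ∏ j ∈ S.erase i, ratio x i j = ∑ i ∈ S, x i := by
  induction S using Finset.induction_on with
  | empty => simp
  | @insert a S ha ih =>
    have hxS : Set.InjOn x S := hx.mono (by simp)
    have hxa : ∀ i ∈ S, x a ≠ x i := fun i hi h =>
      ha (hx (by simp) (by simp [hi]) h ▸ hi)
    have hterm : ∀ i ∈ S, x a * (2 * x i / (x a - x i)) + x i * ratio x i a = x i := by
      intro i hi
      have : x a - x i ≠ 0 := sub_ne_zero.mpr (hxa i hi)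
      have : x i - x a ≠ 0 := sub_ne_zero.mpr (hxa i hi).symm
      simp only [ratio]
      field_simp
      ring
    rw [sum_insert ha, sum_insert ha, erase_insert ha,
      show ∏ j ∈ S, ratio x a j = ∏ j ∈ S, (x a + x j) / (x a - x j) from rfl,
      prod_add_div_sub_eq_one_add_sum x S hxS (x a) hxa, sum_mul_prod_ratio_erase_insert x _ ha,
      ← ih hxS, mul_add, mul_one, add_assoc, add_right_inj, mul_sum,
      ← sum_add_distrib]
    refine sum_congr rfl fun i hi => ?_
    linear_combination (∏ j ∈ S.erase i, ratio x i j) * hterm i hi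

end PartialFractions

variable {F : Type*} [Field F] {n : ℕ}

abbrev addBox (p : ℕ → ℕ) (i : ℕ) : ℕ → ℕ := fun j => if j = i then p j + 1 else p j

def monomial (y : Fin n → F) (p : ℕ → ℕ) : F := ∏ i, y i ^ p i

def schurPairs (n k : ℕ) : Finset (Fin n × Fin n) :=
  univ.filter fun pr => pr.1 < pr.2 ∧ pr.1.val < k

def crossProd (y : Fin n → F) (k : ℕ) : F := ∏ pr ∈ schurPairs n k, ratio y pr.1 pr.2

def macdonaldTerm (y : Fin n → F) (p : ℕ → ℕ) (k : ℕ) : F := monomial y p * crossProd y k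

def macdonaldSum (x : Fin n → F) (p : ℕ → ℕ) (k : ℕ) : F :=
  ∑ w : Perm (Fin n), macdonaldTerm (x ∘ w) p k

lemma monomial_addBox (y : Fin n → F) (p : ℕ → ℕ) (a : Fin n) :
    monomial y (addBox p a) = y a * monomial y p := by
  have hpow : ∀ i : Fin n, y i ^ addBox p a i = (if i = a then y i else 1) * y i ^ p i := by
    intro i
    simp only [addBox, Fin.val_inj]
    split_ifs <;> ring
  simp only [monomial, hpow, prod_mul_distrib, prod_ite_eq', mem_univ, if_true]

lemma monomial_comp_swap (y : Fin n → F) {p : ℕ → ℕ} {a b : Fin n} (hab : p a = p b) :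
    monomial (y ∘ swap a b) p = monomial y p :=
  Fintype.prod_equiv (swap a b) _ _ fun i => by
    rw [Function.comp_apply, swap_apply_def]
    split_ifs <;> simp_all

lemma mem_schurPairs {k : ℕ} {pr : Fin n × Fin n} :
    pr ∈ schurPairs n k ↔ pr.1.val < pr.2.val ∧ pr.1.val < k := by
  simp only [schurPairs, mem_filter, mem_univ, true_and, Fin.lt_def]

lemma crossProd_comp_swap_of_le (y : Fin n → F) {k : ℕ} {a b : Fin n} (ha : k ≤ a.val)
    (hb : k ≤ b.val) : crossProd (y ∘ swap a b) k = crossProd y k :=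
  prod_equiv (prodCongr (swap a b) (swap a b))
    (fun pr => by
      simp only [mem_schurPairs, prodCongr_apply, Prod.map_fst, Prod.map_snd, swap_apply_def]
      split_ifs <;> simp only [Fin.ext_iff] at * <;> omega)
    fun _ _ => rfl

lemma crossProd_comp_swap_of_succ_eq (y : Fin n → F) {k : ℕ} {a b : Fin n}
    (hab : a.val + 1 = b.val) (hb : b.val < k) : crossProd (y ∘ swap a b) k = -crossProd y k := by
  have hmem : (a, b) ∈ schurPairs n k :=
    mem_schurPairs.mpr ⟨show a.val < b.val by omega, show a.val < k by omega⟩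
  have hrest : ∏ pr ∈ (schurPairs n k).erase (a, b), ratio (y ∘ swap a b) pr.1 pr.2 =
      ∏ pr ∈ (schurPairs n k).erase (a, b), ratio y pr.1 pr.2 :=
    prod_equiv (prodCongr (swap a b) (swap a b))
      (fun pr => by
        simp only [mem_erase, ne_eq, Prod.ext_iff, mem_schurPairs, prodCongr_apply, Prod.map_fst,
          Prod.map_snd, swap_apply_def]
        split_ifs <;>
          simp only [Fin.ext_iff, true_and, not_true_eq_false, false_and, iff_false] at * <;> omega)
      fun _ _ => rfl
  have hflip : ratio (y ∘ swap a b) a b = -ratio y a b := by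
    simp only [ratio, Function.comp_apply, swap_apply_left, swap_apply_right]
    rw [add_comm, ← neg_sub, div_neg]
  rw [crossProd, crossProd, ← mul_prod_erase _ _ hmem, ← mul_prod_erase _ _ hmem, hrest, hflip,
    neg_mul]

lemma crossProd_succ (y : Fin n → F) {k : ℕ} (hk : k < n) :
    crossProd y (k + 1) = crossProd y k * ∏ j ∈ Ioi ⟨k, hk⟩, ratio y ⟨k, hk⟩ j := by
  have hlow : (schurPairs n (k + 1)).filter (fun pr => pr.1.val < k) = schurPairs n k := by
    ext pr
    simp only [mem_filter, mem_schurPairs]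
    omega
  have hrow : (schurPairs n (k + 1)).filter (fun pr => ¬ pr.1.val < k) =
      (Ioi ⟨k, hk⟩).map (Function.Embedding.sectR ⟨k, hk⟩ (Fin n)) := by
    ext ⟨i, j⟩
    simp only [mem_filter, mem_schurPairs, mem_map, mem_Ioi, Function.Embedding.sectR_apply,
      Prod.mk.injEq, Fin.lt_def, Fin.ext_iff]
    constructor
    · rintro ⟨⟨h1, h2⟩, h3⟩
      exact ⟨j, by omega, by omega, rfl⟩
    · rintro ⟨j', h1, h2, h3⟩
      omega
  rw [crossProd, crossProd, ← prod_filter_mul_prod_filter_not (schurPairs n (k + 1))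
    (fun pr => pr.1.val < k), hlow, hrow, prod_map]
  rfl

lemma macdonaldTerm_addBox (y : Fin n → F) (p : ℕ → ℕ) (k : ℕ) (a : Fin n) :
    macdonaldTerm y (addBox p a) k = macdonaldTerm y p k * y a := by
  rw [macdonaldTerm, macdonaldTerm, monomial_addBox]
  ring

lemma macdonaldTerm_comp_swap_of_le (y : Fin n → F) {p : ℕ → ℕ} {k : ℕ}
    (hp : ∀ j, k ≤ j → p j = 0) {a b : Fin n} (ha : k ≤ a.val) (hb : k ≤ b.val) :
    macdonaldTerm (y ∘ swap a b) p k = macdonaldTerm y p k := by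
  rw [macdonaldTerm, macdonaldTerm, monomial_comp_swap y (by rw [hp a ha, hp b hb]),
    crossProd_comp_swap_of_le y ha hb]

lemma sum_perm_comp_right (Φ : (Fin n → F) → F) (x : Fin n → F) (τ : Perm (Fin n)) :
    ∑ w : Perm (Fin n), Φ ((x ∘ w) ∘ τ) = ∑ w : Perm (Fin n), Φ (x ∘ w) :=
  Equiv.sum_comp (Equiv.mulRight τ) fun w => Φ (x ∘ w)

lemma sum_macdonaldTerm_mul_comp_swap (x : Fin n → F) {p : ℕ → ℕ} {k : ℕ}
    (hp : ∀ j, k ≤ j → p j = 0) {a b : Fin n} (ha : k ≤ a.val) (hb : k ≤ b.val)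
    (Φ : (Fin n → F) → F) :
    ∑ w : Perm (Fin n), macdonaldTerm (x ∘ w) p k * Φ ((x ∘ w) ∘ swap a b) =
      ∑ w : Perm (Fin n), macdonaldTerm (x ∘ w) p k * Φ (x ∘ w) := by
  rw [← sum_perm_comp_right (fun y => macdonaldTerm y p k * Φ (y ∘ swap a b)) x (swap a b)]
  refine sum_congr rfl fun w _ => ?_
  have hinv : ((x ∘ w) ∘ swap a b) ∘ swap a b = x ∘ w := by
    funext i
    simp
  rw [hinv, macdonaldTerm_comp_swap_of_le _ hp ha hb]

lemma macdonaldSum_eq_zero_of_parts_eq [CharZero F] (x : Fin n → F) {p : ℕ → ℕ} {k : ℕ}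
    {a b : Fin n} (hab : a.val + 1 = b.val) (hb : b.val < k) (hp : p a = p b) :
    macdonaldSum x p k = 0 := by
  rw [← self_eq_neg]
  calc macdonaldSum x p k = ∑ w : Perm (Fin n), macdonaldTerm ((x ∘ w) ∘ swap a b) p k :=
        (sum_perm_comp_right (macdonaldTerm · p k) x _).symm
    _ = -macdonaldSum x p k := by
      rw [macdonaldSum, ← sum_neg_distrib]
      refine sum_congr rfl fun w _ => ?_
      rw [macdonaldTerm, monomial_comp_swap _ hp,
        crossProd_comp_swap_of_succ_eq _ hab hb, mul_neg, macdonaldTerm]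

lemma sum_mul_macdonaldSum (x : Fin n → F) (p : ℕ → ℕ) (k : ℕ) :
    (∑ i, x i) * macdonaldSum x p k = ∑ m : Fin n, macdonaldSum x (addBox p m) k := by
  simp only [macdonaldSum, macdonaldTerm_addBox, mul_sum]
  rw [sum_comm]
  refine sum_congr rfl fun w _ => ?_
  rw [← Equiv.sum_comp w x, sum_mul]
  exact sum_congr rfl fun i _ => mul_comm _ _

lemma macdonaldSum_addBox_eq_of_le (x : Fin n → F) {p : ℕ → ℕ} {k : ℕ}
    (hp : ∀ j, k ≤ j → p j = 0) {a b : Fin n} (ha : k ≤ a.val) (hb : k ≤ b.val) :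
    macdonaldSum x (addBox p a) k = macdonaldSum x (addBox p b) k := by
  simp only [macdonaldSum, macdonaldTerm_addBox]
  have := sum_macdonaldTerm_mul_comp_swap x hp ha hb fun y => y a
  simpa using this.symm

lemma sum_mul_macdonaldSum_eq_add (x : Fin n → F) {p : ℕ → ℕ} {k : ℕ}
    (hp : ∀ j, k ≤ j → p j = 0) (hk : k < n) :
    (∑ i, x i) * macdonaldSum x p k =
      ∑ i ∈ range k, macdonaldSum x (addBox p i) k + (n - k) • macdonaldSum x (addBox p k) k := by
  set K : Fin n := ⟨k, hk⟩
  rw [sum_mul_macdonaldSum, ← sum_filter_add_sum_filter_not univ (· < K)]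
  congr 1
  · have hIio : univ.filter (· < K) = Iio K := by ext; simp
    have hrange : (Iio K).map Fin.valEmbedding = range k := by
      rw [Fin.map_valEmbedding_Iio, Nat.Iio_eq_range]
    rw [hIio, ← hrange, sum_map]
    rfl
  · have hIci : univ.filter (fun m => ¬ m < K) = Ici K := by ext; simp
    rw [hIci, sum_congr rfl fun m hm => macdonaldSum_addBox_eq_of_le x hp
      (b := K) (Fin.le_def.mp (mem_Ici.mp hm)) le_rfl, sum_const, Fin.card_Ici]

lemma mem_erase_iff_swap_mem_erase {α : Type*} [DecidableEq α] {T : Finset α} {a b : α}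
    (ha : a ∈ T) (hb : b ∈ T) (j : α) : j ∈ T.erase a ↔ swap a b j ∈ T.erase b := by
  rw [swap_apply_def]
  split_ifs <;> simp_all [eq_comm]

lemma prod_ratio_erase_comp_swap (y : Fin n → F) {T : Finset (Fin n)} {a b : Fin n} (ha : a ∈ T)
    (hb : b ∈ T) : ∏ j ∈ T.erase a, ratio (y ∘ swap a b) a j = ∏ j ∈ T.erase b, ratio y b j :=
  prod_equiv (swap a b) (mem_erase_iff_swap_mem_erase ha hb) fun j _ => by
    simp only [ratio, Function.comp_apply, swap_apply_left]

/-- Averaged over the positions `m ≥ k`, the new factors `x_m ∏_{j ≥ k, j ≠ m} ratio x m j` add up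
to `∑_{m ≥ k} x_m` (`sum_mul_prod_ratio_erase`). -/
lemma macdonaldSum_addBox_succ [CharZero F] {x : Fin n → F} (hx : Function.Injective x)
    {p : ℕ → ℕ} {k : ℕ} (hp : ∀ j, k ≤ j → p j = 0) (hk : k < n) :
    macdonaldSum x (addBox p k) (k + 1) = macdonaldSum x (addBox p k) k := by
  set K : Fin n := ⟨k, hk⟩
  set T : Finset (Fin n) := Ici K
  have hT : ∀ m ∈ T, k ≤ m.val := fun m hm => Fin.le_def.mp (mem_Ici.mp hm)
  set Ψ : Fin n → (Fin n → F) → F := fun m y => y m * ∏ j ∈ T.erase m, ratio y m j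
  have hlhs : macdonaldSum x (addBox p k) (k + 1) =
      ∑ w : Perm (Fin n), macdonaldTerm (x ∘ w) p k * Ψ K (x ∘ w) := by
    refine sum_congr rfl fun w _ => ?_
    rw [macdonaldTerm, macdonaldTerm, monomial_addBox (a := K), crossProd_succ _ hk, ← Ici_erase]
    ring
  have hswap : ∀ m ∈ T, ∀ y : Fin n → F, Ψ K (y ∘ swap K m) = Ψ m y := fun m hm y => by
    simp only [Ψ, Function.comp_apply, swap_apply_left]
    rw [prod_ratio_erase_comp_swap _ (mem_Ici.mpr le_rfl) hm]
  have hlhs' : ∀ m ∈ T, macdonaldSum x (addBox p k) (k + 1) =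
      ∑ w : Perm (Fin n), macdonaldTerm (x ∘ w) p k * Ψ m (x ∘ w) := fun m hm => by
    rw [hlhs, ← sum_macdonaldTerm_mul_comp_swap x hp (a := K) (b := m) le_rfl (hT m hm) (Ψ K)]
    simp only [hswap m hm]
  have hrhs : ∀ m ∈ T, macdonaldSum x (addBox p k) k =
      ∑ w : Perm (Fin n), macdonaldTerm (x ∘ w) p k * (x ∘ w) m := fun m hm => by
    rw [macdonaldSum_addBox_eq_of_le x hp (a := K) le_rfl (hT m hm), macdonaldSum]
    simp only [macdonaldTerm_addBox]
  have hcard : (T.card : F) ≠ 0 := Nat.cast_ne_zero.mpr (card_ne_zero_of_mem (mem_Ici.mpr le_rfl))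
  refine mul_left_cancel₀ hcard ?_
  calc (T.card : F) * macdonaldSum x (addBox p k) (k + 1)
      = ∑ m ∈ T, ∑ w : Perm (Fin n), macdonaldTerm (x ∘ w) p k * Ψ m (x ∘ w) := by
        rw [← nsmul_eq_mul, ← sum_const, sum_congr rfl hlhs']
    _ = ∑ w : Perm (Fin n), macdonaldTerm (x ∘ w) p k * ∑ m ∈ T, (x ∘ w) m := by
        rw [sum_comm]
        refine sum_congr rfl fun w _ => ?_
        rw [← mul_sum, sum_mul_prod_ratio_erase _ T (hx.comp w.injective).injOn]
    _ = (T.card : F) * macdonaldSum x (addBox p k) k := by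
        rw [← nsmul_eq_mul, ← sum_const, sum_congr rfl hrhs, sum_comm]
        simp only [mul_sum]

lemma macdonaldSum_zero_zero (x : Fin n → F) : macdonaldSum x 0 0 = n.factorial := by
  simp [macdonaldSum, macdonaldTerm, monomial, crossProd, schurPairs, Fintype.card_perm]

noncomputable def X (n : ℕ) : Fin n → FractionRing (MvPolynomial (Fin n) ℚ) :=
  fun i => algebraMap (MvPolynomial (Fin n) ℚ) (FractionRing (MvPolynomial (Fin n) ℚ))
    (MvPolynomial.X i)

lemma X_injective : Function.Injective (X n) :=
  (IsFractionRing.injective _ _).comp MvPolynomial.X_injective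

lemma schurQ_eq_macdonaldSum (p : ℕ → ℕ) (k : ℕ) :
    schurQ n p k = 2 ^ k * ((n - k).factorial : FractionRing (MvPolynomial (Fin n) ℚ))⁻¹ *
      macdonaldSum (X n) p k :=
  rfl

lemma schurQ_one (hn : 0 < n) :
    schurQ n (fun j => if j = 0 then 1 else 0) 1 = 2 * ∑ i, X n i := by
  have hbox : (fun j => if j = 0 then 1 else 0) = addBox 0 0 := by
    funext j
    simp [addBox]
  have hsum := sum_mul_macdonaldSum_eq_add (X n) (p := 0) (fun _ _ => rfl) hn
  rw [macdonaldSum_zero_zero, range_zero, sum_empty, zero_add, Nat.sub_zero, nsmul_eq_mul,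
    ← Nat.mul_factorial_pred hn.ne', Nat.cast_mul, mul_comm, mul_assoc] at hsum
  rw [hbox, schurQ_eq_macdonaldSum,
    macdonaldSum_addBox_succ X_injective (p := 0) (fun _ _ => rfl) hn,
    ← mul_left_cancel₀ (Nat.cast_ne_zero.mpr hn.ne') hsum]
  have : ((n - 1).factorial : FractionRing (MvPolynomial (Fin n) ℚ)) ≠ 0 :=
    Nat.cast_ne_zero.mpr (Nat.factorial_ne_zero _)
  field_simp

lemma schurQ_addBox_eq_zero_of_not_addable (lam : StrictPartition) {i k : ℕ} (hin : i < n)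
    (hlen : i ≤ lam.len) (hik : i < k) (h : ¬(i = 0 ∨ lam.parts i + 1 < lam.parts (i - 1))) :
    schurQ n (addBox lam.parts i) k = 0 := by
  push Not at h
  have hlt := lam.parts_succ_lt (i := i - 1) (by omega)
  rw [Nat.sub_add_cancel (by omega)] at hlt
  rw [schurQ_eq_macdonaldSum, macdonaldSum_eq_zero_of_parts_eq (X n) (a := ⟨i - 1, by omega⟩)
    (b := ⟨i, hin⟩) (by simp only; omega) hik, mul_zero]
  simp only [addBox, if_pos, if_neg (show i - 1 ≠ i by omega)]
  omega

end SchurQ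

open SchurQ Finset in
/-- Pieri rule for Schur Q-functions: for a strict partition `λ`,
`Q₁ · Q_λ = Σ_{μ ⊃ λ, ℓ(μ)=ℓ(λ)} 2 Q_μ + Σ_{μ ⊃ λ, ℓ(μ)=ℓ(λ)+1} Q_μ`,
where `μ` runs over strict partitions of `|λ|+1` containing `λ`, i.e. the
valid one-box additions of `λ` (row `i` is addable iff `i = 0` or
`λ_{i-1} > λ_i + 1`).  The identity in `Λ` is stated in `n ≥ ℓ(λ)+1`
variables for every such `n`. -/
theorem schurQ_pieri (lam : StrictPartition) (n : ℕ) (hn : lam.len + 1 ≤ n) :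
    schurQ n (fun j => if j = 0 then 1 else 0) 1 * schurQ n lam.parts lam.len =
      ∑ i ∈ (Finset.range (lam.len + 1)).filter
          (fun i => i = 0 ∨ lam.parts i + 1 < lam.parts (i - 1)),
        (if i < lam.len then (2 : FractionRing (MvPolynomial (Fin n) ℚ)) else 1) *
          schurQ n (fun j => if j = i then lam.parts j + 1 else lam.parts j)
            (if i < lam.len then lam.len else lam.len + 1) := by
  set k := lam.len with hk
  have hp : ∀ j, k ≤ j → lam.parts j = 0 := fun j => lam.parts_eq_zero_of_len_le
  rw [sum_filter_of_ne fun i hi hne => by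
    rw [mem_range] at hi
    by_contra h
    exact hne (by rw [schurQ_addBox_eq_zero_of_not_addable lam (by omega) (by omega)
      (by split_ifs <;> omega) h, mul_zero])]
  rw [sum_range_succ, if_neg (lt_irrefl k), if_neg (lt_irrefl k), one_mul,
    sum_congr rfl fun i hi => by rw [if_pos (mem_range.mp hi), if_pos (mem_range.mp hi)]]
  calc _ = 2 ^ (k + 1) * ((n - k).factorial : FractionRing (MvPolynomial (Fin n) ℚ))⁻¹ *
        ((∑ i, X n i) * macdonaldSum (X n) lam.parts k) := by
        rw [schurQ_one (by omega), schurQ_eq_macdonaldSum]; ring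
    _ = _ := by
        rw [sum_mul_macdonaldSum_eq_add (X n) hp (by omega), mul_add, mul_sum]
        congr 1
        · exact sum_congr rfl fun i _ => by rw [schurQ_eq_macdonaldSum]; ring
        · rw [schurQ_eq_macdonaldSum, macdonaldSum_addBox_succ X_injective hp (by omega),
            nsmul_eq_mul, ← Nat.mul_factorial_pred (show n - k ≠ 0 by omega),
            show n - k - 1 = n - (k + 1) by omega, Nat.cast_mul]
          have : ((n - k : ℕ) : FractionRing (MvPolynomial (Fin n) ℚ)) ≠ 0 := by
            exact_mod_cast (show n - k ≠ 0 by omega)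
          field_simp
end
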